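/- For every integer d ≥ 1, the joint fixed vectors of the doubled Weyl operators form a one-dimensional space spanned by the maximally entangled vector: if w : ZMod d × ZMod d → ℂ satisfies (U_{a,b} ⊗ₖ Ū_{a,b}).mulVec w = w for all a, b ∈ ZMod d, then there exists c ∈ ℂ with w = c • v, where v(k,l) = 1 if k = l and 0 otherwise. -/

import Mathlib

open Matrix

/-- `ω = exp(2πi/d)`. -/
noncomputable def weylOmega (d : ℕ) : ℂ :=
  Complex.exp (2 * Real.pi * Complex.I / d)

/-- The clock matrix `Z`, diagonal with entries `ω ^ s`. -/
noncomputable def clockMatrix (d : ℕ) : Matrix (ZMod d) (ZMod d) ℂ :=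
  Matrix.diagonal fun s => weylOmega d ^ s.val

/-- The shift matrix `X`, with entries `X s s' = 1` iff `s = s' + 1`. -/
def shiftMatrix (d : ℕ) : Matrix (ZMod d) (ZMod d) ℂ :=
  Matrix.of fun s s' => if s = s' + 1 then 1 else 0

/-- The Weyl operator `U_{a,b} = Z^a · X^b`. -/
noncomputable def weylOp (d : ℕ) [NeZero d] (a b : ZMod d) : Matrix (ZMod d) (ZMod d) ℂ :=
  clockMatrix d ^ a.val * shiftMatrix d ^ b.val

/-! The shifts `U_{0,b} ⊗ Ū_{0,b}` translate `w` along the diagonal, so `w` is constant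
on it. The clock `Z ⊗ Z̄` is diagonal with entry `ω^k · conj ω^l = ω^(k-l)` at `(k, l)`,
which is `1` only for `k = l` since `ω` is a primitive `d`-th root of unity, so `w`
vanishes off the diagonal. -/

section Translation

variable {G H R : Type*} [AddCommGroup G] [DecidableEq G] [AddCommGroup H] [DecidableEq H]
  [Semiring R]

def translationMatrix (g : G) : Matrix G G R :=
  of fun s s' => if s = s' + g then 1 else 0

@[simp]
lemma translationMatrix_map {S : Type*} [Semiring S] (f : R →+* S) (g : G) :
    (translationMatrix g : Matrix G G R).map f = translationMatrix g := by
  ext s s'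
  simp [translationMatrix, apply_ite f]

open Kronecker in
lemma translationMatrix_kronecker (g : G) (h : H) :
    (translationMatrix g ⊗ₖ translationMatrix h : Matrix (G × H) (G × H) R) =
      translationMatrix (g, h) := by
  ext ⟨s, t⟩ ⟨s', t'⟩
  simp [translationMatrix, ← ite_and, Prod.ext_iff, and_comm]

variable [Fintype G]

@[simp]
lemma translationMatrix_mulVec (g : G) (v : G → R) :
    translationMatrix g *ᵥ v = fun s => v (s - g) := by
  ext s
  simp [translationMatrix, mulVec, dotProduct, ← sub_eq_iff_eq_add]

lemma translationMatrix_mul (g h : G) :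
    (translationMatrix g * translationMatrix h : Matrix G G R) = translationMatrix (g + h) := by
  ext s s'
  simp [translationMatrix, mul_apply, add_assoc, add_comm g h]

lemma translationMatrix_pow (g : G) (n : ℕ) :
    (translationMatrix g : Matrix G G R) ^ n = translationMatrix (n • g) := by
  induction n with
  | zero => ext s s'; simp [translationMatrix, one_apply]
  | succ n ih => rw [pow_succ, ih, translationMatrix_mul, succ_nsmul]

end Translation

section Weyl

variable {d : ℕ} [NeZero d]

lemma shiftMatrix_pow (n : ℕ) : shiftMatrix d ^ n = translationMatrix (n : ZMod d) := by
  rw [← nsmul_one, ← translationMatrix_pow]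
  rfl

lemma weylOp_zero_left (b : ZMod d) : weylOp d 0 b = translationMatrix b := by
  simp [weylOp, shiftMatrix_pow]

lemma weylOp_one_zero (hd : d ≠ 1) : weylOp d 1 0 = clockMatrix d := by
  simp [weylOp, ZMod.val_one'' hd]

lemma isPrimitiveRoot_weylOmega : IsPrimitiveRoot (weylOmega d) d :=
  Complex.isPrimitiveRoot_exp d (NeZero.ne d)

lemma eq_of_weylOmega_pow_mul_conj_eq_one {k l : ZMod d}
    (h : weylOmega d ^ k.val * starRingEnd ℂ (weylOmega d ^ l.val) = 1) : k = l := by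
  have hω : IsPrimitiveRoot (weylOmega d) d := isPrimitiveRoot_weylOmega
  have hnorm : ‖weylOmega d ^ l.val‖ = 1 := by
    rw [norm_pow, hω.norm'_eq_one (NeZero.ne d), one_pow]
  rw [← Complex.inv_eq_conj hnorm,
    mul_inv_eq_one₀ (pow_ne_zero _ (hω.ne_zero (NeZero.ne d)))] at h
  exact ZMod.val_injective d (hω.pow_inj k.val_lt l.val_lt h)

open Kronecker in
lemma clock_kronecker_conj_mulVec (w : ZMod d × ZMod d → ℂ) (k l : ZMod d) :
    ((clockMatrix d ⊗ₖ (clockMatrix d).map (starRingEnd ℂ)) *ᵥ w) (k, l) =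
      weylOmega d ^ k.val * starRingEnd ℂ (weylOmega d ^ l.val) * w (k, l) := by
  rw [clockMatrix, diagonal_map (map_zero _), diagonal_kronecker_diagonal, mulVec_diagonal]

end Weyl

open Kronecker in
theorem weyl_fixed_vector_unique_general (d : ℕ) [NeZero d]
    (w : ZMod d × ZMod d → ℂ)
    (hw : ∀ a b : ZMod d,
      ((weylOp d a b) ⊗ₖ (weylOp d a b).map (starRingEnd ℂ)).mulVec w = w) :
    ∃ c : ℂ, w = c • (fun p : ZMod d × ZMod d => if p.1 = p.2 then (1 : ℂ) else 0) := by
  have diagonal_const (k : ZMod d) : w (k, k) = w 0 := by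
    simpa [weylOp_zero_left, translationMatrix_kronecker] using (congrFun (hw 0 k) (k, k)).symm
  have off_diagonal (k l : ZMod d) (hkl : k ≠ l) : w (k, l) = 0 := by
    have : Nontrivial (ZMod d) := ⟨⟨k, l, hkl⟩⟩
    have h := congrFun (hw 1 0) (k, l)
    rw [weylOp_one_zero (ZMod.nontrivial_iff.mp this), clock_kronecker_conj_mulVec] at h
    by_contra hw0
    exact hkl (eq_of_weylOmega_pow_mul_conj_eq_one (mul_eq_right₀ hw0 |>.mp h))
  refine ⟨w 0, funext fun ⟨k, l⟩ => ?_⟩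
  by_cases hkl : k = l
  · simp [hkl, diagonal_const]
  · simp [hkl, off_diagonal k l hkl]

open Kronecker in
theorem weyl_fixed_vector_unique (d : ℕ) (hd : 1 ≤ d) [NeZero d]
    (w : ZMod d × ZMod d → ℂ)
    (hw : ∀ a b : ZMod d,
      ((weylOp d a b) ⊗ₖ (weylOp d a b).map (starRingEnd ℂ)).mulVec w = w) :
    ∃ c : ℂ, w = c • (fun p : ZMod d × ZMod d => if p.1 = p.2 then (1 : ℂ) else 0) :=
  weyl_fixed_vector_unique_general d w hw
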